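/- arXiv:1510.05803 — 4 statements merged into one kernel-verified Lean document; each statement's English description precedes it below -/
import Mathlib

section
/- The number of F_4-points of the Fermat cubic hypersurface X^n: x₁³ + ⋯ + x_{n+2}³ = 0 in P^{n+1} over F_4 is (2^{2n+3} − (−2)^{n+1} − 1)/3. -/
open Projectivization

noncomputable local instance : Fintype (GaloisField 2 2) := Fintype.ofFinite _
attribute [local instance] Classical.propDecidable

private lemma F4card : Fintype.card (GaloisField 2 2) = 4 := by
  have := GaloisField.card 2 2 (by norm_num); simpa using this

private lemma cube_eq_one {x : GaloisField 2 2} (hx : x ≠ 0) : x ^ 3 = 1 := by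
  have h := FiniteField.pow_card_sub_one_eq_one x hx
  rw [F4card] at h; norm_num at h; exact h

private lemma F4negSelf (x : GaloisField 2 2) : -x = x := CharTwo.neg_eq x

private lemma add_one_eq_zero_iff (x : GaloisField 2 2) : x + 1 = 0 ↔ x = 1 := by
  rw [add_eq_zero_iff_eq_neg, F4negSelf 1]

private lemma sum_cube_mem {m : ℕ} (v : Fin m → GaloisField 2 2) :
    ∑ i, v i ^ 3 = 0 ∨ ∑ i, v i ^ 3 = 1 := by
  refine Finset.sum_induction _ (fun x => x = 0 ∨ x = 1) ?_ (Or.inl rfl) ?_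
  · rintro a b (rfl | rfl) (rfl | rfl) <;> simp [CharTwo.add_self_eq_zero]
  · intro i _
    by_cases h : v i = 0
    · left; simp [h]
    · right; exact cube_eq_one h

private noncomputable def aCount (m : ℕ) : ℕ :=
  Nat.card {v : Fin m → GaloisField 2 2 // ∑ i, v i ^ 3 = 0}

private noncomputable def bCount (m : ℕ) : ℕ :=
  Nat.card {v : Fin m → GaloisField 2 2 // ∑ i, v i ^ 3 = 1}

private lemma aCount_zero : aCount 0 = 1 := by
  rw [aCount, Nat.card_eq_one_iff_unique]
  constructor
  · constructor
    intro a b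
    apply Subtype.ext
    funext i
    exact i.elim0
  · exact ⟨⟨fun i => 0, by simp⟩⟩

private lemma ab_total (m : ℕ) : aCount m + bCount m = 4 ^ m := by
  have h1 : Nat.card (Fin m → GaloisField 2 2) = 4 ^ m := by
    rw [Nat.card_eq_fintype_card, Fintype.card_fun, F4card, Fintype.card_fin]
  rw [← h1, aCount, bCount]
  have e1 : {v : Fin m → GaloisField 2 2 // ∑ i, v i ^ 3 = 0} ⊕
      {v : Fin m → GaloisField 2 2 // ¬ ∑ i, v i ^ 3 = 0} ≃ (Fin m → GaloisField 2 2) :=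
    Equiv.sumCompl _
  have e2 : {v : Fin m → GaloisField 2 2 // ¬ ∑ i, v i ^ 3 = 0} ≃
      {v : Fin m → GaloisField 2 2 // ∑ i, v i ^ 3 = 1} :=
    Equiv.subtypeEquivRight (fun v => by
      rcases sum_cube_mem v with h | h <;> simp [h])
  rw [← Nat.card_congr e1, Nat.card_sum, Nat.card_congr e2]

private noncomputable def consEquiv (m : ℕ) :
    {v : Fin (m + 1) → GaloisField 2 2 // ∑ i, v i ^ 3 = 0} ≃
      (a : GaloisField 2 2) × {v : Fin m → GaloisField 2 2 // ∑ i, v i ^ 3 + a ^ 3 = 0} where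
  toFun v := ⟨v.1 0, Fin.tail v.1, by
    have hv := v.2
    rw [Fin.sum_univ_succ] at hv
    rw [add_comm]
    simpa [Fin.tail] using hv⟩
  invFun x := ⟨Fin.cons x.1 x.2.1, by
    have hv := x.2.2
    rw [Fin.sum_univ_succ]
    simpa [add_comm] using hv⟩
  left_inv v := Subtype.ext (Fin.cons_self_tail v.1)
  right_inv x := by
    rcases x with ⟨a, v, hv⟩
    simp only [Fin.cons_zero]
    congr 1

private lemma aCount_succ (m : ℕ) : aCount (m + 1) = aCount m + 3 * bCount m := by
  rw [aCount, Nat.card_congr (consEquiv m), Nat.card_eq_fintype_card, Fintype.card_sigma]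
  have key : ∀ a : GaloisField 2 2,
      Fintype.card {v : Fin m → GaloisField 2 2 // ∑ i, v i ^ 3 + a ^ 3 = 0}
        = if a = 0 then aCount m else bCount m := by
    intro a
    by_cases ha : a = 0
    · rw [if_pos ha, aCount, Nat.card_eq_fintype_card]
      refine Fintype.card_congr (Equiv.subtypeEquivRight fun v => by simp [ha])
    · rw [if_neg ha, bCount, Nat.card_eq_fintype_card]
      refine Fintype.card_congr (Equiv.subtypeEquivRight fun v => by
        rw [cube_eq_one ha, add_one_eq_zero_iff])
  rw [Finset.sum_congr rfl (fun a _ => key a)]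
  have h0 : (Finset.univ.filter (fun a : GaloisField 2 2 => a = 0)).card = 1 := by
    rw [Finset.card_eq_one]
    refine ⟨0, ?_⟩
    ext a
    simp
  have h1 : (Finset.univ.filter (fun a : GaloisField 2 2 => ¬ a = 0)).card = 3 := by
    have h2 := Finset.card_filter_add_card_filter_not
      (s := (Finset.univ : Finset (GaloisField 2 2))) (p := fun a => a = 0)
    rw [Finset.card_univ, F4card] at h2
    omega
  rw [Finset.sum_ite, Finset.sum_const, Finset.sum_const, h0, h1]
  simp [mul_comm]

private lemma two_mul_aCount (m : ℕ) : 2 * (aCount m : ℤ) = 4 ^ m + (-2) ^ m := by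
  induction m with
  | zero => simp [aCount_zero]
  | succ m ih =>
    have h1 := aCount_succ m
    have h2 := ab_total m
    have hb : (bCount m : ℤ) = 4 ^ m - aCount m := by
      have := congrArg (fun x : ℕ => (x : ℤ)) h2
      push_cast at this
      linarith
    have h1' : (aCount (m + 1) : ℤ) = aCount m + 3 * bCount m := by rw [h1]; push_cast; ring
    rw [pow_succ, pow_succ]
    rw [h1', hb]
    linarith

private lemma sum_cube_rep {m : ℕ} (v : Fin m → GaloisField 2 2) (hv : v ≠ 0) :
    ∑ i, (Projectivization.mk (GaloisField 2 2) v hv).rep i ^ 3 = ∑ i, v i ^ 3 := by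
  set p := Projectivization.mk (GaloisField 2 2) v hv with hp
  have h1 : Projectivization.mk (GaloisField 2 2) p.rep p.rep_nonzero = p := mk_rep p
  rw [hp, mk_eq_mk_iff] at h1
  obtain ⟨a, ha⟩ := h1
  rw [← ha]
  refine Finset.sum_congr rfl fun i _ => ?_
  have : (a • v) i = (a : GaloisField 2 2) * v i := rfl
  rw [this, mul_pow, cube_eq_one a.ne_zero, one_mul]

private lemma exists_unit {m : ℕ} (v : Fin m → GaloisField 2 2) (hv : v ≠ 0) :
    ∃ u : (GaloisField 2 2)ˣ,
      u • (Projectivization.mk (GaloisField 2 2) v hv).rep = v := by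
  set p := Projectivization.mk (GaloisField 2 2) v hv with hp
  have h1 : Projectivization.mk (GaloisField 2 2) p.rep p.rep_nonzero = p := mk_rep p
  rw [hp, mk_eq_mk_iff] at h1
  obtain ⟨a, ha⟩ := h1
  exact ⟨a⁻¹, by rw [← ha, inv_smul_smul]⟩

private noncomputable def mainEquiv (m : ℕ) :
    {v : Fin m → GaloisField 2 2 // v ≠ 0 ∧ ∑ i, v i ^ 3 = 0} ≃
      {p : Projectivization (GaloisField 2 2) (Fin m → GaloisField 2 2) //
        ∑ i, p.rep i ^ 3 = 0} × (GaloisField 2 2)ˣ where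
  toFun v := (⟨Projectivization.mk (GaloisField 2 2) v.1 v.2.1, by
      rw [sum_cube_rep]; exact v.2.2⟩,
    (exists_unit v.1 v.2.1).choose)
  invFun x := ⟨x.2 • x.1.1.rep, by
      constructor
      · rw [Units.smul_def]
        exact smul_ne_zero x.2.ne_zero x.1.1.rep_nonzero
      · rw [show ((x.2 : (GaloisField 2 2)ˣ) • x.1.1.rep) = fun i => (x.2 : GaloisField 2 2) * x.1.1.rep i from rfl]
        calc ∑ i, ((x.2 : GaloisField 2 2) * x.1.1.rep i) ^ 3
            = ∑ i, x.1.1.rep i ^ 3 := by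
              refine Finset.sum_congr rfl fun i _ => ?_
              rw [mul_pow, cube_eq_one x.2.ne_zero, one_mul]
          _ = 0 := x.1.2⟩
  left_inv v := Subtype.ext (exists_unit v.1 v.2.1).choose_spec
  right_inv x := by
    rcases x with ⟨⟨p, hp⟩, u⟩
    have hne : u • p.rep ≠ 0 := by
      rw [Units.smul_def]
      exact smul_ne_zero u.ne_zero p.rep_nonzero
    have hmk : Projectivization.mk (GaloisField 2 2) (u • p.rep) hne = p := by
      conv_rhs => rw [← mk_rep p]
      rw [mk_eq_mk_iff]
      exact ⟨u, rfl⟩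
    have hu : (exists_unit (u • p.rep) hne).choose = u := by
      have hs := (exists_unit (u • p.rep) hne).choose_spec
      have hrep := congrArg Projectivization.rep hmk
      have hs2 : (exists_unit (u • p.rep) hne).choose • p.rep = u • p.rep :=
        (congrArg (fun w => (exists_unit (u • p.rep) hne).choose • w) hrep).symm.trans hs
      have : ((exists_unit (u • p.rep) hne).choose : GaloisField 2 2) • p.rep
          = (u : GaloisField 2 2) • p.rep := by
        rw [← Units.smul_def, ← Units.smul_def, hs2]
      have h2 := smul_left_injective (GaloisField 2 2) p.rep_nonzero this
      exact Units.ext h2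
    refine Prod.ext ?_ hu
    exact Subtype.ext hmk

private lemma card_nonzero (m : ℕ) :
    aCount m = Nat.card {v : Fin m → GaloisField 2 2 // v ≠ 0 ∧ ∑ i, v i ^ 3 = 0} + 1 := by
  rw [aCount]
  have e1 : {v : Fin m → GaloisField 2 2 // ∑ i, v i ^ 3 = 0} ≃
      {x : {v : Fin m → GaloisField 2 2 // ∑ i, v i ^ 3 = 0} // x.1 ≠ 0} ⊕
      {x : {v : Fin m → GaloisField 2 2 // ∑ i, v i ^ 3 = 0} // ¬ x.1 ≠ 0} :=
    (Equiv.sumCompl _).symm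
  have e2 : {x : {v : Fin m → GaloisField 2 2 // ∑ i, v i ^ 3 = 0} // x.1 ≠ 0} ≃
      {v : Fin m → GaloisField 2 2 // v ≠ 0 ∧ ∑ i, v i ^ 3 = 0} :=
    (Equiv.subtypeSubtypeEquivSubtypeInter
        (fun v : Fin m → GaloisField 2 2 => ∑ i, v i ^ 3 = 0) (fun v => v ≠ 0)).trans
      (Equiv.subtypeEquivRight fun v => and_comm)
  have h3 : Nat.card {x : {v : Fin m → GaloisField 2 2 // ∑ i, v i ^ 3 = 0} // ¬ x.1 ≠ 0} = 1 := by
    rw [Nat.card_eq_one_iff_unique]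
    constructor
    · constructor
      intro a b
      apply Subtype.ext; apply Subtype.ext
      have ha := not_not.mp a.2
      have hb := not_not.mp b.2
      rw [ha, hb]
    · exact ⟨⟨⟨0, by simp⟩, by simp⟩⟩
  rw [Nat.card_congr e1, Nat.card_sum, Nat.card_congr e2, h3]

private lemma card_units3 : Nat.card (GaloisField 2 2)ˣ = 3 := by
  rw [Nat.card_eq_fintype_card, Fintype.card_units, F4card]

/-- The number of `F₄`-points of the Fermat cubic hypersurface
`x₁³ + ⋯ + x_{n+2}³ = 0` in `P^{n+1}` over `F₄` is `(2^{2n+3} − (−2)^{n+1} − 1)/3`. -/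
theorem fermat_cubic_count_F4 (n : ℕ) :
    (Nat.card {p : Projectivization (GaloisField 2 2) (Fin (n + 2) → GaloisField 2 2) |
        ∑ i, (p.rep i) ^ 3 = 0} : ℤ) * 3
      = 2 ^ (2 * n + 3) - (-2 : ℤ) ^ (n + 1) - 1 := by
  have hmain : Nat.card {v : Fin (n + 2) → GaloisField 2 2 // v ≠ 0 ∧ ∑ i, v i ^ 3 = 0}
      = Nat.card {p : Projectivization (GaloisField 2 2) (Fin (n + 2) → GaloisField 2 2) //
          ∑ i, p.rep i ^ 3 = 0} * 3 := by
    rw [Nat.card_congr (mainEquiv (n + 2)), Nat.card_prod, card_units3]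
  have h1 := card_nonzero (n + 2)
  have h2 := two_mul_aCount (n + 2)
  have hset : Nat.card {p : Projectivization (GaloisField 2 2) (Fin (n + 2) → GaloisField 2 2) |
        ∑ i, (p.rep i) ^ 3 = 0}
      = Nat.card {p : Projectivization (GaloisField 2 2) (Fin (n + 2) → GaloisField 2 2) //
          ∑ i, p.rep i ^ 3 = 0} := rfl
  rw [hset]
  rw [hmain] at h1
  have h1' : (aCount (n + 2) : ℤ)
      = (Nat.card {p : Projectivization (GaloisField 2 2) (Fin (n + 2) → GaloisField 2 2) //
          ∑ i, p.rep i ^ 3 = 0} : ℤ) * 3 + 1 := by exact_mod_cast congrArg (fun x : ℕ => (x : ℤ)) h1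
  rw [h1'] at h2
  have e4 : (4 : ℤ) ^ (n + 2) = 2 * 2 ^ (2 * n + 3) := by
    rw [show (4 : ℤ) = 2 ^ 2 by norm_num, ← pow_mul]
    rw [show 2 * (n + 2) = (2 * n + 3) + 1 by ring, pow_succ]
    ring
  have e5 : ((-2 : ℤ)) ^ (n + 2) = (-2) * (-2) ^ (n + 1) := by
    rw [pow_succ]; ring
  rw [e4, e5] at h2
  linarith
end

section
/- The number of F_2-points of the Fermat cubic X^n over F_2 equals 2^{n+1} − 1, and the quantity (N₁² − 2(1+2^n)N₁ + N₂)/8, with N₁ = 2^{n+1}−1 and N₂ = (2^{2n+3} − (−2)^{n+1} − 1)/3, equals (2^{2n} + 1 + ((−1)^n − 9)·2^{n−2})/3. -/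
open Projectivization

lemma cube_eq_self_zmod_two : ∀ x : ZMod 2, x ^ 3 = x := by decide

lemma rep_mk_eq_zmod_two {n : ℕ} (v : Fin n → ZMod 2) (hv : v ≠ 0) :
    (Projectivization.mk (ZMod 2) v hv).rep = v := by
  obtain ⟨a, ha⟩ := exists_smul_eq_mk_rep (ZMod 2) v hv
  rw [Subsingleton.elim a 1, one_smul] at ha
  exact ha.symm

lemma fermat_cubic_point_count (n : ℕ) :
    Nat.card {p : Projectivization (ZMod 2) (Fin (n + 2) → ZMod 2) |
        ∑ i, (p.rep i) ^ 3 = 0} = 2 ^ (n + 1) - 1 := by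
  have e1 : {p : Projectivization (ZMod 2) (Fin (n + 2) → ZMod 2) |
        ∑ i, (p.rep i) ^ 3 = 0} ≃
      {v : Fin (n + 2) → ZMod 2 // v ≠ 0 ∧ ∑ i, v i = 0} :=
    { toFun := fun p => ⟨p.1.rep, p.1.rep_nonzero, by
        have := p.2
        simpa only [Set.mem_setOf_eq, cube_eq_self_zmod_two] using this⟩
      invFun := fun v => ⟨Projectivization.mk _ v.1 v.2.1, by
        simp only [Set.mem_setOf_eq, rep_mk_eq_zmod_two, cube_eq_self_zmod_two]
        exact v.2.2⟩
      left_inv := fun p => Subtype.ext (p.1.mk_rep)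
      right_inv := fun v => Subtype.ext (rep_mk_eq_zmod_two v.1 v.2.1) }
  have e2 : {v : Fin (n + 2) → ZMod 2 // v ≠ 0 ∧ ∑ i, v i = 0} ≃
      {w : Fin (n + 1) → ZMod 2 // w ≠ 0} :=
    { toFun := fun v => ⟨fun i => v.1 i.castSucc, by
        intro h
        apply v.2.1
        have hs := v.2.2
        rw [Fin.sum_univ_castSucc] at hs
        funext j
        refine Fin.lastCases ?_ ?_ j
        · have : ∑ i : Fin (n+1), v.1 i.castSucc = 0 := by
            apply Finset.sum_eq_zero; intro i _; exact congrFun h i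
          rw [this, zero_add] at hs
          exact hs
        · intro i; exact congrFun h i⟩
      invFun := fun w => ⟨Fin.snoc w.1 (∑ i, w.1 i), by
        constructor
        · intro h
          apply w.2
          funext i
          have := congrFun h i.castSucc
          rwa [Fin.snoc_castSucc] at this
        · rw [Fin.sum_univ_castSucc]
          simp only [Fin.snoc_castSucc, Fin.snoc_last]
          exact CharTwo.add_self_eq_zero _⟩
      left_inv := fun v => by
        apply Subtype.ext
        funext j
        refine Fin.lastCases ?_ ?_ j
        · simp only [Fin.snoc_last]
          have hs := v.2.2
          rw [Fin.sum_univ_castSucc] at hs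
          rw [add_eq_zero_iff_eq_neg.mp hs, CharTwo.neg_eq]
        · intro i; simp only [Fin.snoc_castSucc]
      right_inv := fun w => by
        apply Subtype.ext
        funext i
        simp only [Fin.snoc_castSucc] }
  rw [Nat.card_congr (e1.trans e2), Nat.card_eq_fintype_card]
  rw [Fintype.card_subtype_compl]
  simp

theorem fermat_cubic_F2_points_and_lines (n : ℕ) (hn : 2 ≤ n) :
    Nat.card {p : Projectivization (ZMod 2) (Fin (n + 2) → ZMod 2) |
        ∑ i, (p.rep i) ^ 3 = 0} = 2 ^ (n + 1) - 1 ∧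
    (((2 : ℚ) ^ (n + 1) - 1) ^ 2 - 2 * (1 + 2 ^ n) * ((2 : ℚ) ^ (n + 1) - 1)
        + ((2 : ℚ) ^ (2 * n + 3) - (-2 : ℚ) ^ (n + 1) - 1) / 3) / 8
      = ((2 : ℚ) ^ (2 * n) + 1 + ((-1 : ℚ) ^ n - 9) * 2 ^ (n - 2)) / 3 := by
  refine ⟨fermat_cubic_point_count n, ?_⟩
  obtain ⟨m, rfl⟩ : ∃ m, n = m + 2 := ⟨n - 2, by omega⟩
  have h : m + 2 - 2 = m := by omega
  have hb : ((-2:ℚ))^(m+2+1) = (-1:ℚ)^m * 2^m * (-8) := by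
    rw [neg_pow, pow_add, pow_add, pow_add, pow_add]; ring
  rw [h, hb, show 2*(m+2)+3 = m+(m+7) by ring, show 2*(m+2) = m+(m+4) by ring]
  simp only [pow_add]
  ring
end

section
/- For a cubic hypersurface X ⊂ P^{n+1}_{F_q} of dimension n ≥ 6, the number of F_q-lines contained in X is at least (q^{n−1} − 1)/(q² − 1). -/
open MvPolynomial

lemma amgm_nat {q k : ℕ} (hq : 2 ≤ q) (hk : k ≤ q - 1) :
    q ^ (q - 1 - k) ≤ (q - k) ^ (q - 1) := by
  have hq1 : (1:ℝ) ≤ (q:ℝ) - 1 := by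
    have : (2:ℝ) ≤ q := by exact_mod_cast hq
    linarith
  have hq1' : (0:ℝ) < (q:ℝ) - 1 := by linarith
  have hkq : (k:ℝ) ≤ (q:ℝ) - 1 := by
    have := (Nat.cast_le (α := ℝ)).2 hk
    have h1q : 1 ≤ q := by omega
    rwa [Nat.cast_sub h1q, Nat.cast_one] at this
  set w₁ : ℝ := ((q:ℝ) - 1 - k) / ((q:ℝ) - 1) with hw₁def
  set w₂ : ℝ := (k:ℝ) / ((q:ℝ) - 1) with hw₂def
  have hw₁ : 0 ≤ w₁ := by
    apply div_nonneg _ hq1'.le; linarith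
  have hw₂ : 0 ≤ w₂ := by
    apply div_nonneg _ hq1'.le; positivity
  have hw : w₁ + w₂ = 1 := by
    rw [hw₁def, hw₂def, ← add_div,
      show (q:ℝ) - 1 - k + k = (q:ℝ) - 1 by ring, div_self hq1'.ne']
  have hgm := Real.geom_mean_le_arith_mean2_weighted hw₁ hw₂
    (Nat.cast_nonneg q) zero_le_one hw
  rw [Real.one_rpow, mul_one] at hgm
  have harith : w₁ * q + w₂ * 1 = (q:ℝ) - k := by
    rw [mul_one]
    rw [hw₁def, hw₂def, div_mul_eq_mul_div, ← add_div,
      show ((q:ℝ) - 1 - k) * q + k = ((q:ℝ) - k) * ((q:ℝ) - 1) by ring,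
      mul_div_assoc, div_self hq1'.ne', mul_one]
  rw [harith] at hgm
  have hpow := pow_le_pow_left₀ (Real.rpow_nonneg (Nat.cast_nonneg q) w₁) hgm (q - 1)
  have hL : ((q:ℝ) ^ w₁) ^ (q - 1) = (q:ℝ) ^ (q - 1 - k : ℕ) := by
    rw [← Real.rpow_natCast ((q:ℝ) ^ w₁) (q-1), ← Real.rpow_mul (Nat.cast_nonneg q)]
    have hcast : w₁ * ((q - 1 : ℕ) : ℝ) = ((q - 1 - k : ℕ) : ℝ) := by
      rw [Nat.cast_sub hk, Nat.cast_sub (show 1 ≤ q by omega), Nat.cast_one, hw₁def]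
      field_simp
    rw [hcast, Real.rpow_natCast]
  rw [hL] at hpow
  have hR : ((q:ℝ) - k) ^ (q-1) = (((q - k : ℕ) : ℝ)) ^ (q-1) := by
    rw [Nat.cast_sub (by omega)]
  rw [hR] at hpow
  exact_mod_cast hpow

lemma coeff_prod_sum_of_natDegree_le {R : Type*} [CommSemiring R] {ι : Type*}
    (s : Finset ι) (P : ι → Polynomial R) (d : ι → ℕ)
    (h : ∀ i ∈ s, (P i).natDegree ≤ d i) :
    (∏ i ∈ s, P i).coeff (∑ i ∈ s, d i) = ∏ i ∈ s, (P i).coeff (d i) := by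
  classical
  induction s using Finset.induction_on with
  | empty => simp
  | @insert a s' ha ih =>
    rw [Finset.prod_insert ha, Finset.sum_insert ha, Finset.prod_insert ha,
      Polynomial.coeff_mul_add_eq_of_natDegree_le (h a (Finset.mem_insert_self a s'))
        (le_trans (Polynomial.natDegree_prod_le s' P) (Finset.sum_le_sum
          (fun i hi => h i (Finset.mem_insert_of_mem hi)))),
      ih (fun i hi => h i (Finset.mem_insert_of_mem hi))]

def reduceExp (q e : ℕ) : ℕ := if e = 0 then 0 else (e - 1) % (q - 1) + 1

lemma reduceExp_zero (q : ℕ) : reduceExp q 0 = 0 := by simp [reduceExp]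

lemma reduceExp_le (q e : ℕ) : reduceExp q e ≤ e := by
  unfold reduceExp
  split
  · omega
  · have := Nat.mod_le (e - 1) (q - 1); omega

lemma reduceExp_lt_q {q : ℕ} (hq : 2 ≤ q) (e : ℕ) : reduceExp q e ≤ q - 1 := by
  unfold reduceExp
  split
  · omega
  · have : (e - 1) % (q - 1) < q - 1 := Nat.mod_lt _ (by omega)
    omega

section FF
variable {F : Type*} [Field F] [Fintype F]

lemma pow_reduceExp (x : F) (e : ℕ) : x ^ reduceExp (Fintype.card F) e = x ^ e := by
  set q := Fintype.card F with hq
  rcases Nat.eq_zero_or_pos e with rfl | he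
  · rw [reduceExp_zero]
  · have hred : reduceExp q e = (e - 1) % (q - 1) + 1 := by
      unfold reduceExp; simp [Nat.pos_iff_ne_zero.mp he]
    rcases eq_or_ne x 0 with rfl | hx
    · rw [hred, zero_pow (by omega), zero_pow (by omega)]
    · have hdecomp : e = reduceExp q e + (q - 1) * ((e - 1) / (q - 1)) := by
        have := Nat.mod_add_div (e - 1) (q - 1)
        omega
      conv_rhs => rw [hdecomp]
      rw [pow_add, pow_mul, FiniteField.pow_card_sub_one_eq_one x hx, one_pow, mul_one]

lemma exists_reduced (m : ℕ) (P : MvPolynomial (Fin m) F) :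
    ∃ g : MvPolynomial (Fin m) F, (∀ x, eval x g = eval x P) ∧
      (∀ d ∈ g.support, ∀ i, d i ≤ Fintype.card F - 1) ∧
      g.totalDegree ≤ P.totalDegree := by
  classical
  set q := Fintype.card F with hq
  have hq2 : 2 ≤ q := Fintype.one_lt_card
  set red : (Fin m →₀ ℕ) → (Fin m →₀ ℕ) :=
    fun d => Finsupp.mapRange (reduceExp q) (reduceExp_zero q) d with hred
  refine ⟨∑ d ∈ P.support, monomial (red d) (coeff d P), ?_, ?_, ?_⟩
  · intro x
    rw [map_sum]
    conv_rhs => rw [← support_sum_monomial_coeff P, map_sum]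
    apply Finset.sum_congr rfl
    intro d _
    rw [eval_monomial, eval_monomial]
    congr 1
    rw [hred]
    rw [Finsupp.prod_mapRange_index (fun a => pow_zero _)]
    exact Finsupp.prod_congr (fun i _ => pow_reduceExp (x i) (d i))
  · intro d hd i
    have := MvPolynomial.support_sum hd
    simp only [Finset.mem_biUnion] at this
    obtain ⟨d', _, hd'⟩ := this
    have hsub := MvPolynomial.support_monomial (a := coeff d' P) (s := red d')
    rw [hsub] at hd'
    by_cases hc : coeff d' P = 0
    · simp [hc] at hd'
    · simp [hc] at hd'
      subst hd'
      rw [hred]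
      simp only [Finsupp.mapRange_apply]
      exact reduceExp_lt_q hq2 _
  · refine (totalDegree_finset_sum _ _).trans (Finset.sup_le ?_)
    intro d hd
    refine (totalDegree_monomial_le _ _).trans ?_
    have h1 : (red d).sum (fun _ e => e) ≤ d.sum (fun _ e => e) := by
      rw [hred]
      rw [Finsupp.sum_mapRange_index (fun a => rfl)]
      exact Finset.sum_le_sum (fun i _ => reduceExp_le q (d i))
    exact h1.trans (le_totalDegree hd)

end FF

section Key
variable {F : Type*} [Field F] [Fintype F]

lemma warning_count : ∀ (m : ℕ) (g : MvPolynomial (Fin m) F), g ≠ 0 →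
    (∀ d ∈ g.support, ∀ i, d i ≤ Fintype.card F - 1) →
    Fintype.card F ^ ((Fintype.card F - 1) * m) ≤
      (Nat.card {x : Fin m → F // eval x g ≠ 0}) ^ (Fintype.card F - 1)
        * Fintype.card F ^ g.totalDegree := by
  classical
  intro m
  induction m with
  | zero =>
    intro g hg _
    obtain ⟨a, rfl⟩ := MvPolynomial.C_surjective (Fin 0) g
    have ha : a ≠ 0 := fun h => hg (by rw [h, map_zero])
    have hall : ∀ x : Fin 0 → F, eval x (C a) ≠ 0 := by simp [ha]
    have hcard : Nat.card {x : Fin 0 → F // eval x (C a) ≠ 0} = 1 := by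
      rw [Nat.card_congr (Equiv.subtypeUnivEquiv hall)]
      simp [Nat.card_eq_fintype_card]
    rw [hcard, totalDegree_C]
    simp
  | succ m ih =>
    intro g hg hred
    set q := Fintype.card F with hqdef
    have hq2 : 2 ≤ q := Fintype.one_lt_card
    set G := finSuccEquiv F m g with hG
    have hG0 : G ≠ 0 := by
      intro h
      apply hg
      apply (finSuccEquiv F m).injective
      rw [← hG, h, map_zero]
    set k := G.natDegree with hk'
    set gk := G.coeff k with hgkdef
    have hgk0 : gk ≠ 0 := by
      rw [hgkdef, hk']
      exact Polynomial.leadingCoeff_ne_zero.mpr hG0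
    have hk : k ≤ q - 1 := by
      rw [hk', hG, natDegree_finSuccEquiv]
      exact degreeOf_le_iff.mpr (fun d hd => hred d hd 0)
    have hredk : ∀ d ∈ gk.support, ∀ i, d i ≤ q - 1 := by
      intro d hd i
      rw [mem_support_iff] at hd
      rw [hgkdef, hG, finSuccEquiv_coeff_coeff] at hd
      have := hred _ (mem_support_iff.mpr hd) i.succ
      rwa [Finsupp.cons_succ] at this
    have hDk : gk.totalDegree + k ≤ g.totalDegree := by
      rw [hgkdef, hG]
      exact totalDegree_coeff_finSuccEquiv_add_le g k (by rw [← hG, ← hgkdef]; exact hgk0)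
    have hIH := ih gk hgk0 hredk
    set Nk := Nat.card {x : Fin m → F // eval x gk ≠ 0} with hNk
    set N := Nat.card {x : Fin (m + 1) → F // eval x g ≠ 0} with hN
    -- counting claim
    have claim : (q - k) * Nk ≤ N := by
      have hNsum : N = ∑ x' : Fin m → F,
          Nat.card {t : F // eval (Fin.cons t x') g ≠ 0} := by
        rw [hN]
        rw [Nat.card_congr ((Equiv.subtypeProdEquivSigmaSubtype
            (fun (x' : Fin m → F) (t : F) => eval (Fin.cons t x') g ≠ 0)).symm.trans
          (Equiv.subtypeEquiv ((Equiv.prodComm _ _).trans (Fin.consEquiv (fun _ => F)))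
            (fun p => Iff.rfl))).symm]
        rw [Nat.card_eq_fintype_card, Fintype.card_sigma]
        simp [Nat.card_eq_fintype_card]
      have hpoint : ∀ x' : Fin m → F, eval x' gk ≠ 0 →
          q - k ≤ Nat.card {t : F // eval (Fin.cons t x') g ≠ 0} := by
        intro x' hx'
        set u := Polynomial.map (eval x') G with hu
        have hcoeff : u.coeff k = eval x' gk := by
          rw [hu, Polynomial.coeff_map, hgkdef]
        have hu0 : u ≠ 0 := fun h => hx' (by rw [← hcoeff, h, Polynomial.coeff_zero])
        have hudeg : u.natDegree ≤ k := by
          rw [hu, hk']; exact Polynomial.natDegree_map_le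
        have hz : (Finset.univ.filter (fun t : F => u.eval t = 0)).card ≤ k := by
          have hsub : (Finset.univ.filter (fun t : F => u.eval t = 0)) ⊆ u.roots.toFinset := by
            intro t ht
            rw [Finset.mem_filter] at ht
            rw [Multiset.mem_toFinset, Polynomial.mem_roots hu0]
            exact ht.2
          calc (Finset.univ.filter (fun t : F => u.eval t = 0)).card
              ≤ u.roots.toFinset.card := Finset.card_le_card hsub
            _ ≤ Multiset.card u.roots := Multiset.toFinset_card_le _
            _ ≤ u.natDegree := Polynomial.card_roots' u
            _ ≤ k := hudeg
        have hcompl : (Finset.univ.filter (fun t : F => u.eval t = 0)).card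
            + (Finset.univ.filter (fun t : F => ¬ (u.eval t = 0))).card = q := by
          rw [Finset.card_filter_add_card_filter_not]
          simp [hqdef]
        have hcards : Nat.card {t : F // eval (Fin.cons t x') g ≠ 0}
            = (Finset.univ.filter (fun t : F => ¬ (u.eval t = 0))).card := by
          rw [Nat.card_eq_fintype_card, Fintype.card_subtype]
          congr 1
          apply Finset.filter_congr
          intro t _
          rw [eval_eq_eval_mv_eval', ← hG, ← hu]
        omega
      calc (q - k) * Nk
          = ∑ _x' ∈ Finset.univ.filter (fun x' : Fin m → F => eval x' gk ≠ 0), (q - k) := by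
            rw [Finset.sum_const, smul_eq_mul, mul_comm]
            congr 1
            rw [hNk, Nat.card_eq_fintype_card, Fintype.card_subtype]
        _ ≤ ∑ x' ∈ Finset.univ.filter (fun x' : Fin m → F => eval x' gk ≠ 0),
              Nat.card {t : F // eval (Fin.cons t x') g ≠ 0} := by
            apply Finset.sum_le_sum
            intro x' hx'
            rw [Finset.mem_filter] at hx'
            exact hpoint x' hx'.2
        _ ≤ ∑ x' : Fin m → F, Nat.card {t : F // eval (Fin.cons t x') g ≠ 0} :=
            Finset.sum_le_sum_of_subset (Finset.filter_subset _ _)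
        _ = N := hNsum.symm
    -- final arithmetic
    calc q ^ ((q - 1) * (m + 1))
        = q ^ ((q - 1) * m) * q ^ (q - 1) := by rw [Nat.mul_succ, pow_add]
      _ ≤ (Nk ^ (q - 1) * q ^ gk.totalDegree) * q ^ (q - 1) :=
          Nat.mul_le_mul_right _ hIH
      _ = Nk ^ (q - 1) * (q ^ (gk.totalDegree + k) * q ^ (q - 1 - k)) := by
          rw [mul_assoc, ← pow_add, ← pow_add]
          congr 2
          omega
      _ ≤ Nk ^ (q - 1) * (q ^ (gk.totalDegree + k) * (q - k) ^ (q - 1)) :=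
          mul_le_mul_right (mul_le_mul_right (amgm_nat hq2 hk) _) _
      _ ≤ Nk ^ (q - 1) * (q ^ g.totalDegree * (q - k) ^ (q - 1)) :=
          mul_le_mul_right (Nat.mul_le_mul_right _
            (Nat.pow_le_pow_right (by omega) hDk)) _
      _ = ((q - k) * Nk) ^ (q - 1) * q ^ g.totalDegree := by
          rw [mul_pow]; ring
      _ ≤ N ^ (q - 1) * q ^ g.totalDegree :=
          Nat.mul_le_mul_right _ (Nat.pow_le_pow_left claim _)

end Key

section W2
variable {F : Type*} [Field F] [Fintype F]

lemma warningII {m : ℕ} (f : MvPolynomial (Fin m) F) (h0 : eval (0 : Fin m → F) f = 0) :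
    Fintype.card F ^ (m - f.totalDegree) ≤ Nat.card {x : Fin m → F // eval x f = 0} := by
  classical
  set q := Fintype.card F with hqdef
  have hq2 : 2 ≤ q := Fintype.one_lt_card
  set P : MvPolynomial (Fin m) F := 1 - f ^ (q - 1) with hP
  have hevalP : ∀ x : Fin m → F, eval x P = if eval x f = 0 then 1 else 0 := by
    intro x
    rw [hP, map_sub, map_one, map_pow]
    split
    · rename_i h; rw [h, zero_pow (by omega), sub_zero]
    · rename_i h; rw [FiniteField.pow_card_sub_one_eq_one _ h, sub_self]
  obtain ⟨g, hgev, hgred, hgdeg⟩ := exists_reduced m P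
  have hg0 : g ≠ 0 := by
    intro h
    have := hgev 0
    rw [h, map_zero, hevalP 0, if_pos h0] at this
    exact one_ne_zero this.symm
  have hiff : ∀ x : Fin m → F, (eval x g ≠ 0) ↔ (eval x f = 0) := by
    intro x
    rw [hgev x, hevalP x]
    split
    · rename_i h; simpa using h
    · rename_i h; simpa using h
  have hcard : Nat.card {x : Fin m → F // eval x g ≠ 0}
      = Nat.card {x : Fin m → F // eval x f = 0} := by
    exact Nat.card_congr (Equiv.subtypeEquiv (Equiv.refl _) (fun x => by simp [hiff x]))
  have hkey := warning_count m g hg0 hgred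
  rw [hcard] at hkey
  set N := Nat.card {x : Fin m → F // eval x f = 0} with hN
  have hN1 : 1 ≤ N := by
    have : Nonempty {x : Fin m → F // eval x f = 0} := ⟨⟨0, h0⟩⟩
    exact Nat.card_pos
  set D := f.totalDegree with hD
  by_cases hmD : m ≤ D
  · have : m - D = 0 := by omega
    rw [this, pow_zero]
    exact hN1
  · push_neg at hmD
    have hgD : g.totalDegree ≤ (q - 1) * D := by
      refine hgdeg.trans ?_
      rw [hP]
      have h1 : (1 - f ^ (q-1) : MvPolynomial (Fin m) F) = 1 + (-(f ^ (q-1))) := by ring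
      rw [h1]
      refine (totalDegree_add _ _).trans ?_
      rw [totalDegree_neg, totalDegree_one]
      refine max_le (by omega) ?_
      exact (totalDegree_pow _ _).trans (by rw [hD])
    have hchain : q ^ ((q-1) * m) ≤ N ^ (q-1) * q ^ ((q-1) * D) :=
      hkey.trans (Nat.mul_le_mul_left _ (Nat.pow_le_pow_right (by omega) hgD))
    have hsplit : (q-1) * m = (q-1) * (m - D) + (q-1) * D := by
      rw [← Nat.mul_add]
      congr 1
      omega
    rw [hsplit, pow_add] at hchain
    have hcancel : q ^ ((q-1) * (m - D)) ≤ N ^ (q-1) :=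
      Nat.le_of_mul_le_mul_right hchain (by positivity)
    have : (q ^ (m - D)) ^ (q - 1) ≤ N ^ (q-1) := by
      rw [← pow_mul, mul_comm (m - D)]
      exact hcancel
    exact (Nat.pow_le_pow_iff_left (by omega)).mp this

end W2

section LineMach
variable {F : Type*} [Field F] {m : ℕ}

/-- substitution sending `X i` to `v i + X i * T`. -/
noncomputable def lineSub (v : Fin m → F) : Fin m → Polynomial (MvPolynomial (Fin m) F) :=
  fun i => Polynomial.C (C (v i)) + Polynomial.C (X i) * Polynomial.X

lemma lineSub_natDegree_le (v : Fin m → F) (i : Fin m) : (lineSub v i).natDegree ≤ 1 := by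
  refine (Polynomial.natDegree_add_le _ _).trans (max_le ?_ ?_)
  · simp
  · exact (Polynomial.natDegree_C_mul_le _ _).trans Polynomial.natDegree_X_le

lemma lineSub_coeff_one (v : Fin m → F) (i : Fin m) : (lineSub v i).coeff 1 = X i := by
  simp [lineSub]

lemma lineSub_coeff_isHomog (v : Fin m → F) (i : Fin m) (j : ℕ) :
    ((lineSub v i).coeff j).IsHomogeneous j := by
  rcases j with _ | j
  · simpa [lineSub] using isHomogeneous_C _ _
  · rcases j with _ | j
    · simpa [lineSub] using isHomogeneous_X _ _
    · simp only [lineSub, Polynomial.coeff_add, Polynomial.coeff_C, Polynomial.coeff_C_mul,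
        Polynomial.coeff_X]
      norm_num
      exact isHomogeneous_zero _ _ _

lemma eval_lineSub (p : MvPolynomial (Fin m) F) (v y : Fin m → F) (t : F) :
    Polynomial.eval t (Polynomial.map (eval y) (MvPolynomial.aeval (lineSub v) p))
      = eval (v + t • y) p := by
  induction p using MvPolynomial.induction_on with
  | C a => simp [Polynomial.algebraMap_apply, MvPolynomial.algebraMap_eq]
  | add p q hp hq => simp only [map_add, Polynomial.map_add, Polynomial.eval_add, hp, hq]
  | mul_X p i hp =>
    simp only [map_mul, aeval_X, Polynomial.eval_mul, hp, lineSub, Polynomial.map_add,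
      Polynomial.map_C, Polynomial.map_mul, Polynomial.map_X, Polynomial.eval_add,
      Polynomial.eval_C, Polynomial.eval_mul, Polynomial.eval_X, eval_C, eval_X, eval_mul,
      Pi.add_apply, Pi.smul_apply, smul_eq_mul]
    ring

lemma coeff_aeval_lineSub_isHomog (v : Fin m → F) (p : MvPolynomial (Fin m) F) (j : ℕ) :
    ((MvPolynomial.aeval (lineSub v) p).coeff j).IsHomogeneous j := by
  induction p using MvPolynomial.induction_on generalizing j with
  | C a =>
    rcases j with _ | j
    · simpa [Polynomial.algebraMap_apply, MvPolynomial.algebraMap_eq] using isHomogeneous_C _ _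
    · have hz : ((algebraMap F (Polynomial (MvPolynomial (Fin m) F))) a).coeff (j+1) = 0 := by
        simp [Polynomial.algebraMap_apply, Polynomial.coeff_C]
      rw [aeval_C, hz]
      exact isHomogeneous_zero _ _ _
  | add p q hp hq =>
    simp only [map_add, Polynomial.coeff_add]
    exact (hp j).add (hq j)
  | mul_X p i hp =>
    rw [map_mul, aeval_X, Polynomial.coeff_mul]
    apply IsHomogeneous.sum
    intro x hx
    have hxy : x.1 + x.2 = j := Finset.HasAntidiagonal.mem_antidiagonal.mp hx
    rw [← hxy]
    exact (hp x.1).mul (lineSub_coeff_isHomog v i x.2)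

lemma isHomog_support_sum {p : MvPolynomial (Fin m) F} {n : ℕ} (hp : p.IsHomogeneous n)
    {k : Fin m →₀ ℕ} (hk : k ∈ p.support) : (k.sum fun _ e => e) = n := by
  have := hp (mem_support_iff.mp hk)
  simpa [Finsupp.weight_apply, smul_eq_mul, Finsupp.sum] using this

lemma aeval_lineSub_decomp (v : Fin m → F) (f : MvPolynomial (Fin m) F) :
    MvPolynomial.aeval (lineSub v) f = ∑ k ∈ f.support,
      Polynomial.C (C (coeff k f)) * (k.prod fun i e => (lineSub v i) ^ e) := by
  conv_lhs => rw [← support_sum_monomial_coeff f]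
  rw [map_sum]
  refine Finset.sum_congr rfl (fun k _ => ?_)
  rw [aeval_monomial]
  congr 1

lemma prod_lineSub_natDegree_le (v : Fin m → F) (k : Fin m →₀ ℕ) :
    (k.prod fun i e => (lineSub v i) ^ e).natDegree ≤ k.sum fun _ e => e := by
  rw [Finsupp.prod, Finsupp.sum]
  refine (Polynomial.natDegree_prod_le _ _).trans (Finset.sum_le_sum fun i _ => ?_)
  exact (Polynomial.natDegree_pow_le).trans (by
    have := lineSub_natDegree_le v i
    calc k i * (lineSub v i).natDegree ≤ k i * 1 := Nat.mul_le_mul_left _ this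
      _ = k i := mul_one _)

lemma prod_lineSub_coeff_top (v : Fin m → F) (k : Fin m →₀ ℕ) :
    (k.prod fun i e => (lineSub v i) ^ e).coeff (k.sum fun _ e => e) = monomial k 1 := by
  rw [Finsupp.prod, Finsupp.sum,
    coeff_prod_sum_of_natDegree_le _ _ _ (fun i _ => (Polynomial.natDegree_pow_le).trans
      (by calc k i * (lineSub v i).natDegree ≤ k i * 1 :=
              Nat.mul_le_mul_left _ (lineSub_natDegree_le v i)
            _ = k i := mul_one _))]
  have hterm : ∀ i, ((lineSub v i) ^ (k i)).coeff (k i) = (X i : MvPolynomial (Fin m) F) ^ (k i) := by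
    intro i
    have := Polynomial.coeff_pow_of_natDegree_le (p := lineSub v i) (n := 1) (m := k i)
      (lineSub_natDegree_le v i)
    rw [mul_one] at this
    rw [this, lineSub_coeff_one]
  rw [Finset.prod_congr rfl (fun i _ => hterm i)]
  rw [monomial_eq, C_1, one_mul, Finsupp.prod]

lemma aeval_lineSub_coeff_three (v : Fin m → F) (f : MvPolynomial (Fin m) F)
    (hf : f.IsHomogeneous 3) :
    (MvPolynomial.aeval (lineSub v) f).coeff 3 = f := by
  rw [aeval_lineSub_decomp, Polynomial.finset_sum_coeff]
  have : ∀ k ∈ f.support,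
      (Polynomial.C (C (coeff k f)) * (k.prod fun i e => (lineSub v i) ^ e)).coeff 3
        = monomial k (coeff k f) := by
    intro k hk
    rw [Polynomial.coeff_C_mul, ← isHomog_support_sum hf hk, prod_lineSub_coeff_top,
      C_mul_monomial, mul_one]
  rw [Finset.sum_congr rfl this, support_sum_monomial_coeff]

lemma aeval_lineSub_coeff_hi (v : Fin m → F) (f : MvPolynomial (Fin m) F)
    (hf : f.IsHomogeneous 3) (j : ℕ) (hj : 4 ≤ j) :
    (MvPolynomial.aeval (lineSub v) f).coeff j = 0 := by
  rw [aeval_lineSub_decomp, Polynomial.finset_sum_coeff]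
  refine Finset.sum_eq_zero (fun k hk => ?_)
  rw [Polynomial.coeff_C_mul, Polynomial.coeff_eq_zero_of_natDegree_lt, mul_zero]
  calc (k.prod fun i e => (lineSub v i) ^ e).natDegree ≤ k.sum fun _ e => e :=
        prod_lineSub_natDegree_le v k
    _ = 3 := isHomog_support_sum hf hk
    _ < j := by omega

lemma eval_smul_isHomog {f : MvPolynomial (Fin m) F} {d : ℕ} (hf : f.IsHomogeneous d)
    (c : F) (x : Fin m → F) : eval (c • x) f = c ^ d * eval x f := by
  conv_lhs => rw [← support_sum_monomial_coeff f]
  conv_rhs => rw [← support_sum_monomial_coeff f]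
  rw [map_sum, map_sum, Finset.mul_sum]
  refine Finset.sum_congr rfl (fun k hk => ?_)
  rw [eval_monomial, eval_monomial]
  have : (k.prod fun i e => (c • x) i ^ e) = c ^ d * k.prod fun i e => x i ^ e := by
    rw [Finsupp.prod, Finsupp.prod]
    have h1 : ∀ i ∈ k.support, (c • x) i ^ k i = c ^ k i * x i ^ k i := by
      intro i _
      rw [Pi.smul_apply, smul_eq_mul, mul_pow]
    rw [Finset.prod_congr rfl h1, Finset.prod_mul_distrib, Finset.prod_pow_eq_pow_sum]
    congr 2
    have := isHomog_support_sum hf hk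
    rwa [Finsupp.sum] at this
  rw [this]
  ring

end LineMach

section ExistsLine
variable {F : Type*} [Field F] [Fintype F]

lemma eval_zero_isHomog {m d : ℕ} {p : MvPolynomial (Fin m) F} (hp : p.IsHomogeneous d)
    (hd : d ≠ 0) : eval (0 : Fin m → F) p = 0 := by
  have h := eval_smul_isHomog hp 0 0
  rwa [smul_zero, zero_pow hd, zero_mul] at h

lemma exists_line {n : ℕ} (hn : 6 ≤ n) (f : MvPolynomial (Fin (n+2)) F)
    (hf : f.IsHomogeneous 3) (v : Fin (n+2) → F) (hv : v ≠ 0) (hfv : eval v f = 0) :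
    ∃ W : Submodule F (Fin (n+2) → F), Module.finrank F W = 2 ∧
      (∀ w ∈ W, eval w f = 0) ∧ v ∈ W := by
  classical
  obtain ⟨i₀, hi₀⟩ : ∃ i, v i ≠ 0 := by
    by_contra h; push_neg at h; exact hv (funext h)
  set g := MvPolynomial.aeval (lineSub v) f with hgdef
  set c : ℕ → MvPolynomial (Fin (n+2)) F := fun j => g.coeff j with hcdef
  have hchom : ∀ j, (c j).IsHomogeneous j := fun j => coeff_aeval_lineSub_isHomog v f j
  have hc3 : c 3 = f := aeval_lineSub_coeff_three v f hf
  set sys : Fin 4 → MvPolynomial (Fin (n+2)) F := ![X i₀, c 1, c 2, c 3] with hsysdef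
  -- Chevalley–Warning
  have hdegsum : (∑ i, (sys i).totalDegree) < Fintype.card (Fin (n+2)) := by
    rw [Fin.sum_univ_four]
    have h1 : (sys 0).totalDegree = 1 := by simp [hsysdef, totalDegree_X]
    have h2 : (sys 1).totalDegree ≤ 1 := by
      simpa [hsysdef] using (hchom 1).totalDegree_le
    have h3 : (sys 2).totalDegree ≤ 2 := by
      simpa [hsysdef] using (hchom 2).totalDegree_le
    have h4 : (sys 3).totalDegree ≤ 3 := by
      simpa [hsysdef] using (hchom 3).totalDegree_le
    rw [Fintype.card_fin]
    omega
  set p := ringChar F with hpdef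
  have hp : p.Prime := by
    rcases CharP.char_is_prime_or_zero F p with h | h
    · exact h
    · exact absurd h (CharP.char_ne_zero_of_finite F p)
  have hdvd0 := char_dvd_card_solutions_of_fintype_sum_lt p hdegsum
  have hdvd : p ∣ Fintype.card {x : Fin (n+2) → F // ∀ i, eval x (sys i) = 0} := by
    convert hdvd0 using 2
  have hzero : ∀ i, eval (0 : Fin (n+2) → F) (sys i) = 0 := by
    intro i
    fin_cases i
    · simp [hsysdef]
    · exact eval_zero_isHomog (hchom 1) one_ne_zero
    · exact eval_zero_isHomog (hchom 2) two_ne_zero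
    · exact eval_zero_isHomog (hchom 3) three_ne_zero
  have hcard2 : 2 ≤ Fintype.card {x : Fin (n+2) → F // ∀ i, eval x (sys i) = 0} := by
    have hpos : 0 < Fintype.card {x : Fin (n+2) → F // ∀ i, eval x (sys i) = 0} :=
      Fintype.card_pos_iff.mpr ⟨⟨0, hzero⟩⟩
    exact le_trans hp.two_le (Nat.le_of_dvd hpos hdvd)
  obtain ⟨y', hy'⟩ := Fintype.exists_ne_of_one_lt_card (by omega) (⟨0, hzero⟩ :
    {x : Fin (n+2) → F // ∀ i, eval x (sys i) = 0})
  set y := y'.1 with hydef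
  have hy0 : y ≠ 0 := fun h => hy' (Subtype.ext h)
  have hyi₀ : y i₀ = 0 := by
    have := y'.2 0
    simpa [hsysdef] using this
  have hyc1 : eval y (c 1) = 0 := by simpa [hsysdef] using y'.2 1
  have hyc2 : eval y (c 2) = 0 := by simpa [hsysdef] using y'.2 2
  have hyf : eval y f = 0 := by
    have := y'.2 3
    simpa [hsysdef, hc3] using this
  -- the key evaluation identity
  have hgnd : g.natDegree ≤ 3 :=
    Polynomial.natDegree_le_iff_coeff_eq_zero.mpr
      (fun j hj => aeval_lineSub_coeff_hi v f hf j (by omega))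
  have hc0 : eval y (c 0) = eval v f := by
    have h := eval_lineSub f v y 0
    rw [zero_smul, add_zero] at h
    rw [← h, ← Polynomial.coeff_zero_eq_eval_zero, Polynomial.coeff_map]
  have hline : ∀ t : F, eval (v + t • y) f = 0 := by
    intro t
    rw [← eval_lineSub f v y t]
    have hmapnd : (Polynomial.map (eval y) g).natDegree < 4 :=
      lt_of_le_of_lt (le_trans Polynomial.natDegree_map_le hgnd) (by norm_num)
    rw [Polynomial.eval_eq_sum_range' hmapnd]
    have hco : ∀ j, (Polynomial.map (eval y) g).coeff j = eval y (c j) := by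
      intro j; rw [Polynomial.coeff_map]
    rw [Finset.sum_range_succ, Finset.sum_range_succ, Finset.sum_range_succ,
      Finset.sum_range_one]
    rw [hco 0, hco 1, hco 2, hco 3, hc0, hfv, hyc1, hyc2, hc3, hyf]
    ring
  -- vanishing on all combinations
  have hcomb : ∀ a b : F, eval (a • v + b • y) f = 0 := by
    intro a b
    rcases eq_or_ne a 0 with rfl | ha
    · rw [zero_smul, zero_add, eval_smul_isHomog hf, hyf, mul_zero]
    · have hrw : a • v + b • y = a • (v + (b / a) • y) := by
        rw [smul_add, smul_smul, mul_div_cancel₀ _ ha]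
      rw [hrw, eval_smul_isHomog hf, hline (b / a), mul_zero]
  -- linear independence
  have hli : LinearIndependent F ![v, y] := by
    rw [LinearIndependent.pair_iff]
    intro s t hst
    have h0 : s * v i₀ + t * y i₀ = 0 := by
      have := congrFun hst i₀
      simpa using this
    rw [hyi₀, mul_zero, add_zero] at h0
    have hs : s = 0 := by
      rcases mul_eq_zero.mp h0 with h | h
      · exact h
      · exact absurd h hi₀
    subst hs
    rw [zero_smul, zero_add] at hst
    rcases smul_eq_zero.mp hst with h | h
    · exact ⟨rfl, h⟩
    · exact absurd h hy0
  refine ⟨Submodule.span F (Set.range ![v, y]), ?_, ?_, ?_⟩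
  · rw [finrank_span_eq_card hli, Fintype.card_fin]
  · intro w hw
    obtain ⟨co, hco⟩ := (Submodule.mem_span_range_iff_exists_fun F).mp hw
    rw [Fin.sum_univ_two] at hco
    simp only [Matrix.cons_val_zero, Matrix.cons_val_one, Matrix.head_cons] at hco
    rw [← hco]
    exact hcomb (co 0) (co 1)
  · apply Submodule.subset_span
    exact ⟨0, rfl⟩

end ExistsLine

open MvPolynomial in
/-- A cubic hypersurface of dimension `n ≥ 6` over `F_q` contains at least
`(q^{n-1} - 1)/(q² - 1)` rational lines. -/
theorem cubic_high_dim_line_count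
    (F : Type*) [Field F] [Fintype F] (n : ℕ) (hn : 6 ≤ n)
    (f : MvPolynomial (Fin (n + 2)) F) (hf : f.IsHomogeneous 3) (hf0 : f ≠ 0) :
    ((Fintype.card F : ℝ) ^ (n - 1) - 1) / ((Fintype.card F : ℝ) ^ 2 - 1)
      ≤ Nat.card {W : Submodule F (Fin (n + 2) → F) //
          Module.finrank F W = 2 ∧ ∀ v ∈ W, eval v f = 0} := by
  classical
  set q := Fintype.card F with hq
  have hq2 : 2 ≤ q := Fintype.one_lt_card
  have htd : f.totalDegree = 3 := hf.totalDegree hf0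
  have h0 : eval (0 : Fin (n+2) → F) f = 0 := eval_zero_isHomog hf three_ne_zero
  have hW2 := warningII f h0
  rw [htd, show n + 2 - 3 = n - 1 by omega] at hW2
  -- the finset of nonzero points on the cone
  set S : Finset (Fin (n+2) → F) := Finset.univ.filter (fun x => eval x f = 0) with hS
  have hScard : q ^ (n-1) ≤ S.card := by
    rw [Nat.card_eq_fintype_card, Fintype.card_subtype] at hW2
    exact hW2
  have h0S : (0 : Fin (n+2) → F) ∈ S := by
    rw [hS, Finset.mem_filter]
    exact ⟨Finset.mem_univ _, h0⟩
  -- the subtype of nonzero points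
  set A := {x : Fin (n+2) → F // eval x f = 0 ∧ x ≠ 0} with hA
  have hAcard : q ^ (n-1) - 1 ≤ Nat.card A := by
    have h1 : Finset.univ.filter (fun x : Fin (n+2) → F => eval x f = 0 ∧ x ≠ 0)
        = S.erase 0 := by
      ext x
      rw [Finset.mem_erase, hS, Finset.mem_filter, Finset.mem_filter]
      constructor
      · rintro ⟨-, h, hne⟩; exact ⟨hne, Finset.mem_univ _, h⟩
      · rintro ⟨hne, -, h⟩; exact ⟨Finset.mem_univ _, h, hne⟩
    rw [hA, Nat.card_eq_fintype_card, Fintype.card_subtype, h1,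
      Finset.card_erase_of_mem h0S]
    omega
  set T := {W : Submodule F (Fin (n + 2) → F) //
      Module.finrank F W = 2 ∧ ∀ v ∈ W, eval v f = 0} with hT
  haveI : Finite (Submodule F (Fin (n+2) → F)) :=
    Finite.of_injective (fun W => (W : Set (Fin (n+2) → F))) SetLike.coe_injective
  haveI : Finite T := Subtype.finite
  haveI : Fintype T := Fintype.ofFinite T
  -- the map from points to lines
  have hexists : ∀ a : A, ∃ W : Submodule F (Fin (n+2) → F),
      Module.finrank F W = 2 ∧ (∀ w ∈ W, eval w f = 0) ∧ a.1 ∈ W :=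
    fun a => exists_line hn f hf a.1 a.2.2 a.2.1
  set Φ : A → T := fun a => ⟨(hexists a).choose, (hexists a).choose_spec.1,
    (hexists a).choose_spec.2.1⟩ with hΦ
  have hΦmem : ∀ a : A, a.1 ∈ (Φ a).1 := fun a => (hexists a).choose_spec.2.2
  -- fibers have at most q^2 - 1 elements
  have hfiber : ∀ b : T, Nat.card {a : A // Φ a = b} ≤ q ^ 2 - 1 := by
    intro b
    have hcardb : Fintype.card b.1 = q ^ 2 := by
      rw [Module.card_eq_pow_finrank (K := F) (V := b.1), b.2.1]
    have hcardb' : Nat.card {w : b.1 // (w : Fin (n+2) → F) ≠ 0} = q ^ 2 - 1 := by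
      rw [Nat.card_eq_fintype_card, Fintype.card_subtype]
      have h2 : Finset.univ.filter (fun w : b.1 => ¬((w : Fin (n+2) → F) = 0))
          = Finset.univ.erase 0 := by
        ext w
        rw [Finset.mem_filter, Finset.mem_erase]
        constructor
        · rintro ⟨-, hw⟩
          exact ⟨fun h => hw (by rw [h]; rfl), Finset.mem_univ _⟩
        · rintro ⟨hw, -⟩
          refine ⟨Finset.mem_univ _, fun h => hw (Subtype.ext h)⟩
      rw [h2, Finset.card_erase_of_mem (Finset.mem_univ _), Finset.card_univ, hcardb]
    rw [← hcardb']
    apply Nat.card_le_card_of_injective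
      (fun a => (⟨⟨a.1.1, by have := hΦmem a.1; rwa [a.2] at this⟩, a.1.2.2⟩ :
        {w : b.1 // (w : Fin (n+2) → F) ≠ 0}))
    intro a a' haa
    apply Subtype.ext
    apply Subtype.ext
    exact congrArg (fun z => (z.1 : Fin (n+2) → F)) haa
  -- total count
  have htotal : Nat.card A ≤ Fintype.card T * (q ^ 2 - 1) := by
    have hsig : Nat.card A = ∑ b : T, Nat.card {a : A // Φ a = b} := by
      rw [← Nat.card_congr (Equiv.sigmaFiberEquiv Φ), Nat.card_eq_fintype_card,
        Fintype.card_sigma]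
      exact Finset.sum_congr rfl (fun b _ => (Nat.card_eq_fintype_card).symm)
    rw [hsig]
    calc ∑ b : T, Nat.card {a : A // Φ a = b} ≤ ∑ _b : T, (q ^ 2 - 1) :=
          Finset.sum_le_sum (fun b _ => hfiber b)
      _ = Fintype.card T * (q ^ 2 - 1) := by
          rw [Finset.sum_const, smul_eq_mul, Finset.card_univ]
  have hmain : q ^ (n-1) - 1 ≤ Nat.card T * (q ^ 2 - 1) := by
    rw [Nat.card_eq_fintype_card]
    omega
  -- convert to the real inequality
  have hq2R : (0:ℝ) < (q:ℝ) ^ 2 - 1 := by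
    have : (2:ℝ) ≤ (q:ℝ) := by exact_mod_cast hq2
    nlinarith
  rw [div_le_iff₀ hq2R]
  have hcast : ((q ^ (n-1) - 1 : ℕ) : ℝ) ≤ ((Nat.card T * (q ^ 2 - 1) : ℕ) : ℝ) :=
    Nat.cast_le.mpr hmain
  have h1q : 1 ≤ q ^ (n-1) := Nat.one_le_pow _ _ (by omega)
  have h1q2 : 1 ≤ q ^ 2 := Nat.one_le_pow _ _ (by omega)
  rw [Nat.cast_mul, Nat.cast_sub h1q, Nat.cast_sub h1q2] at hcast
  push_cast at hcast ⊢
  linarith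
end

section
/- For real q ≥ 23, for all l ∈ {0,1,…,22} and ε ∈ {−1,1} (with ε = 1 when l = 0), the quantity 1 + q⁴ + 12q² + εq(1+q²) + 2q²((2l−11)² − 11) + 2(2l−11)q(1 + q² + εq) is at least q⁴ − 21q³ + 210q² − 21q + 1, and q⁴ − 21q³ + 210q² − 21q + 1 > 0. -/
theorem cubic_fourfold_vertex_values (q : ℝ) (hq : 23 ≤ q)
    (l : ℕ) (hl : l ≤ 22) (ε : ℝ) (hε : ε = 1 ∨ ε = -1) (hl0 : l = 0 → ε = 1) :
    q ^ 4 - 21 * q ^ 3 + 210 * q ^ 2 - 21 * q + 1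
        ≤ 1 + q ^ 4 + 12 * q ^ 2 + ε * q * (1 + q ^ 2)
            + 2 * q ^ 2 * ((2 * (l : ℝ) - 11) ^ 2 - 11)
            + 2 * (2 * (l : ℝ) - 11) * q * (1 + q ^ 2 + ε * q) ∧
    0 < q ^ 4 - 21 * q ^ 3 + 210 * q ^ 2 - 21 * q + 1 := by
  have h0 : (0:ℝ) < q := by linarith
  have hl' : (0:ℝ) ≤ (l:ℝ) := Nat.cast_nonneg l
  constructor
  · rcases hε with rfl | rfl
    · have hb : (0:ℝ) ≤ q^3 + (2*(l:ℝ)-21)*q^2 + q := by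
        nlinarith [mul_nonneg hl' (sq_nonneg q)]
      nlinarith [mul_nonneg (by linarith : (0:ℝ) ≤ 2*(l:ℝ)) hb]
    · have hl1 : 1 ≤ l := by
        rcases Nat.eq_zero_or_pos l with h | h
        · have := hl0 h; norm_num at this
        · exact h
      have hl1' : (1:ℝ) ≤ (l:ℝ) := by exact_mod_cast hl1
      have hb : (0:ℝ) ≤ q^3 + (2*(l:ℝ)-22)*q^2 + q := by
        nlinarith [mul_nonneg (by linarith : (0:ℝ) ≤ (l:ℝ)-1) (sq_nonneg q)]
      nlinarith [mul_nonneg (by linarith : (0:ℝ) ≤ 2*(l:ℝ)-1) hb]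
  · nlinarith [mul_nonneg (pow_nonneg h0.le 3) (show (0:ℝ) ≤ q - 21 by linarith), mul_pos h0 h0, mul_nonneg h0.le (show (0:ℝ) ≤ q - 1 by linarith)]
end
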